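/- For 0 < β ≤ 1, let D'₈(β) be the octagon with vertices v₁ = (2-β, -3), v₂ = (-β, -3), v₃ = (-2, -1), v₄ = (-2, 1), v₅ = -v₁, ..., v₈ = -v₄, and Λ(β) the lattice generated by (2,0) and (1 + β/2, 2). Then D'₈(β) + Λ(β) is a five-fold tiling of ℝ². -/
import Mathlib
open Topology Filter


/-- `K + X` is a `k`-fold tiling of the plane. -/
def IsKFoldTiling (K X : Set (ℝ × ℝ)) (k : ℕ) : Prop :=
  (∀ y : ℝ × ℝ, ∃ S : Finset (ℝ × ℝ), ↑S ⊆ {x ∈ X | y - x ∈ K} ∧ k ≤ S.card) ∧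
  (∀ y : ℝ × ℝ, ∀ S : Finset (ℝ × ℝ), ↑S ⊆ {x ∈ X | y - x ∈ interior K} → S.card ≤ k)

/-- The octagon `D'₈(β)` with vertices `(2-β,-3), (-β,-3), (-2,-1), (-2,1)`
and their negatives. -/
noncomputable def D₈'β (β : ℝ) : Set (ℝ × ℝ) :=
  convexHull ℝ {(2 - β, -(3:ℝ)), (-β, -(3:ℝ)), (-(2:ℝ), -(1:ℝ)), (-(2:ℝ), (1:ℝ)),
    (β - 2, (3:ℝ)), (β, (3:ℝ)), ((2:ℝ), (1:ℝ)), ((2:ℝ), -(1:ℝ))}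

/-- The lattice `Λ(β)` generated by `(2,0)` and `(1 + β/2, 2)`. -/
def Λβ (β : ℝ) : Set (ℝ × ℝ) :=
  {p | ∃ m n : ℤ, p = (2*m + n*(1 + β/2), 2*(n : ℝ))}

/-- convex combination membership via coordinates -/
lemma seg_mem {K : Set (ℝ×ℝ)} (hK : Convex ℝ K) {u v : ℝ×ℝ} (hu : u ∈ K) (hv : v ∈ K)
    {lam : ℝ} (h0 : 0 ≤ lam) (h1 : lam ≤ 1) {p : ℝ×ℝ}
    (hp1 : p.1 = (1-lam)*u.1 + lam*v.1) (hp2 : p.2 = (1-lam)*u.2 + lam*v.2) : p ∈ K := by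
  have h := hK hu hv (show (0:ℝ) ≤ 1 - lam by linarith) h0 (by ring)
  have : p = (1-lam) • u + lam • v := by
    apply Prod.ext <;> simp [hp1, hp2]
  rwa [this]

lemma between_mem {K : Set (ℝ×ℝ)} (hK : Convex ℝ K) {x1 x2 x t : ℝ}
    (h1 : (x1, t) ∈ K) (h2 : (x2, t) ∈ K) (ha : x1 ≤ x) (hb : x ≤ x2) : (x, t) ∈ K := by
  rcases eq_or_lt_of_le (ha.trans hb) with heq | hlt
  · have : x = x1 := le_antisymm (heq ▸ hb) ha
    exact this ▸ h1
  · have hne : x2 - x1 ≠ 0 := by linarith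
    refine seg_mem hK h1 h2 (lam := (x - x1)/(x2 - x1)) ?_ ?_ ?_ ?_
    · exact div_nonneg (by linarith) (by linarith)
    · rw [div_le_one (by linarith)]; linarith
    · field_simp; ring
    · ring

lemma between_mem_v {K : Set (ℝ×ℝ)} (hK : Convex ℝ K) {t1 t2 x t : ℝ}
    (h1 : (x, t1) ∈ K) (h2 : (x, t2) ∈ K) (ha : t1 ≤ t) (hb : t ≤ t2) : (x, t) ∈ K := by
  rcases eq_or_lt_of_le (ha.trans hb) with heq | hlt
  · have : t = t1 := le_antisymm (heq ▸ hb) ha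
    exact this ▸ h1
  · have hne : t2 - t1 ≠ 0 := by linarith
    refine seg_mem hK h1 h2 (lam := (t - t1)/(t2 - t1)) ?_ ?_ ?_ ?_
    · exact div_nonneg (by linarith) (by linarith)
    · rw [div_le_one (by linarith)]; linarith
    · ring
    · field_simp; ring

lemma mem_K (β : ℝ) (px pt : ℝ)
    (ht1 : -3 ≤ pt) (ht2 : pt ≤ 3) (hx1 : -2 ≤ px) (hx2 : px ≤ 2)
    (h5 : 2*px - β*pt ≤ 4+β) (h6 : -(4+β) ≤ 2*px - β*pt)
    (h7 : 2*px + (2-β)*pt ≤ 6-β) (h8 : -(6-β) ≤ 2*px + (2-β)*pt) :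
    (px, pt) ∈ D₈'β β := by
  have hconv : Convex ℝ (D₈'β β) := convex_convexHull ℝ _
  have hsub := subset_convexHull ℝ
    {(2 - β, -(3:ℝ)), (-β, -(3:ℝ)), (-(2:ℝ), -(1:ℝ)), (-(2:ℝ), (1:ℝ)),
    (β - 2, (3:ℝ)), (β, (3:ℝ)), ((2:ℝ), (1:ℝ)), ((2:ℝ), -(1:ℝ))}
  have hv1 : ((2 - β, -(3:ℝ)) : ℝ×ℝ) ∈ D₈'β β := hsub (by simp [Set.mem_insert_iff])
  have hv2 : ((-β, -(3:ℝ)) : ℝ×ℝ) ∈ D₈'β β := hsub (by simp [Set.mem_insert_iff])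
  have hv3 : ((-(2:ℝ), -(1:ℝ)) : ℝ×ℝ) ∈ D₈'β β := hsub (by simp [Set.mem_insert_iff])
  have hv4 : ((-(2:ℝ), (1:ℝ)) : ℝ×ℝ) ∈ D₈'β β := hsub (by simp [Set.mem_insert_iff])
  have hv5 : ((β - 2, (3:ℝ)) : ℝ×ℝ) ∈ D₈'β β := hsub (by simp [Set.mem_insert_iff])
  have hv6 : ((β, (3:ℝ)) : ℝ×ℝ) ∈ D₈'β β := hsub (by simp [Set.mem_insert_iff])
  have hv7 : (((2:ℝ), (1:ℝ)) : ℝ×ℝ) ∈ D₈'β β := hsub (by simp [Set.mem_insert_iff])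
  have hv8 : (((2:ℝ), -(1:ℝ)) : ℝ×ℝ) ∈ D₈'β β := hsub (by simp [Set.mem_insert_iff])
  rcases le_or_gt pt (-1) with hc1 | hc1
  · set s : ℝ := (pt+3)/2 with hs
    have hs0 : 0 ≤ s := by rw [hs]; linarith
    have hs1 : s ≤ 1 := by rw [hs]; linarith
    have hL : ((β - 6 - (2-β)*pt)/2, pt) ∈ D₈'β β := by
      refine seg_mem hconv hv2 hv3 hs0 hs1 ?_ ?_ <;> (simp [hs]; ring)
    have hR : (((4+β+β*pt)/2 : ℝ), pt) ∈ D₈'β β := by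
      refine seg_mem hconv hv1 hv8 hs0 hs1 ?_ ?_ <;> (simp [hs]; ring)
    exact between_mem hconv hL hR (by linarith) (by linarith)
  rcases le_or_gt 1 pt with hc2 | hc2
  · set s : ℝ := (pt-1)/2 with hs
    have hs0 : 0 ≤ s := by rw [hs]; linarith
    have hs1 : s ≤ 1 := by rw [hs]; linarith
    have hL : ((β*pt - β - 4)/2, pt) ∈ D₈'β β := by
      refine seg_mem hconv hv4 hv5 hs0 hs1 ?_ ?_ <;> (simp [hs]; ring)
    have hR : (((6 - β + (β-2)*pt)/2 : ℝ), pt) ∈ D₈'β β := by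
      refine seg_mem hconv hv7 hv6 hs0 hs1 ?_ ?_ <;> (simp [hs]; ring)
    exact between_mem hconv hL hR (by linarith) (by linarith)
  · have hB : (px, (-1:ℝ)) ∈ D₈'β β := between_mem hconv hv3 hv8 hx1 hx2
    have hT : (px, (1:ℝ)) ∈ D₈'β β := between_mem hconv hv4 hv7 hx1 hx2
    exact between_mem_v hconv hB hT (by linarith) (by linarith)

lemma interior_halfspaceX {α γ c : ℝ} (hne : 0 < α^2 + γ^2) {K : Set (ℝ×ℝ)}
    (hK : K ⊆ {p : ℝ×ℝ | α*p.1 + γ*p.2 ≤ c}) :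
    interior K ⊆ {p : ℝ×ℝ | α*p.1 + γ*p.2 < c} := by
  intro p hp
  by_contra hlt
  simp only [Set.mem_setOf_eq, not_lt] at hlt
  have hc : α*p.1 + γ*p.2 = c := le_antisymm (hK (interior_subset hp)) hlt
  have hn : K ∈ 𝓝 p := mem_interior_iff_mem_nhds.1 hp
  have hcont : Filter.Tendsto (fun t : ℝ => p + t • ((α, γ) : ℝ×ℝ)) (nhdsWithin 0 (Set.Ioi 0)) (𝓝 p) := by
    have h2 : Filter.Tendsto (fun t : ℝ => p + t • ((α, γ) : ℝ×ℝ)) (𝓝 0) (𝓝 (p + (0:ℝ) • ((α, γ):ℝ×ℝ))) := by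
      exact (continuous_const.add ((continuous_id).smul continuous_const)).tendsto 0
    simpa using h2.mono_left nhdsWithin_le_nhds
  obtain ⟨t, htK, ht0⟩ := ((hcont.eventually_mem hn).and self_mem_nhdsWithin).exists
  have hle := hK htK
  simp only [Set.mem_setOf_eq, Prod.fst_add, Prod.snd_add, Prod.smul_fst, Prod.smul_snd,
    smul_eq_mul] at hle
  have ht0' : (0:ℝ) < t := ht0
  nlinarith [hle, hc, ht0']

lemma hull_subset_halfspace {α γ c : ℝ} (β : ℝ)
    (H1 : α*(2-β) + γ*(-3) ≤ c) (H2 : α*(-β) + γ*(-3) ≤ c)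
    (H3 : α*(-2) + γ*(-1) ≤ c) (H4 : α*(-2) + γ*1 ≤ c)
    (H5 : α*(β-2) + γ*3 ≤ c) (H6 : α*β + γ*3 ≤ c)
    (H7 : α*2 + γ*1 ≤ c) (H8 : α*2 + γ*(-1) ≤ c) :
    D₈'β β ⊆ {p : ℝ×ℝ | α*p.1 + γ*p.2 ≤ c} := by
  apply convexHull_min
  · intro p hp
    simp only [Set.mem_insert_iff, Set.mem_singleton_iff] at hp
    rcases hp with rfl|rfl|rfl|rfl|rfl|rfl|rfl|rfl <;> simp <;> linarith
  · exact convex_halfSpace_le ⟨fun x y => by simp; ring, fun s x => by simp [smul_eq_mul]; ring⟩ c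

lemma interior_K_prop (β : ℝ) (hβ0 : 0 < β) (hβ1 : β ≤ 1) {p : ℝ×ℝ}
    (hp : p ∈ interior (D₈'β β)) :
    p.1 < 2 ∧ -2 < p.1 ∧ p.2 < 3 ∧ -3 < p.2 ∧
    2*p.1 - β*p.2 < 4+β ∧ -(4+β) < 2*p.1 - β*p.2 ∧
    2*p.1 + (2-β)*p.2 < 6-β ∧ -(6-β) < 2*p.1 + (2-β)*p.2 := by
  have A1 := interior_halfspaceX (α := 1) (γ := 0) (c := 2) (by norm_num)
    (hull_subset_halfspace β (by nlinarith) (by nlinarith) (by nlinarith) (by nlinarith)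
      (by nlinarith) (by nlinarith) (by nlinarith) (by nlinarith)) hp
  have A2 := interior_halfspaceX (α := -1) (γ := 0) (c := 2) (by norm_num)
    (hull_subset_halfspace β (by nlinarith) (by nlinarith) (by nlinarith) (by nlinarith)
      (by nlinarith) (by nlinarith) (by nlinarith) (by nlinarith)) hp
  have A3 := interior_halfspaceX (α := 0) (γ := 1) (c := 3) (by norm_num)
    (hull_subset_halfspace β (by nlinarith) (by nlinarith) (by nlinarith) (by nlinarith)
      (by nlinarith) (by nlinarith) (by nlinarith) (by nlinarith)) hp
  have A4 := interior_halfspaceX (α := 0) (γ := -1) (c := 3) (by norm_num)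
    (hull_subset_halfspace β (by nlinarith) (by nlinarith) (by nlinarith) (by nlinarith)
      (by nlinarith) (by nlinarith) (by nlinarith) (by nlinarith)) hp
  have A5 := interior_halfspaceX (α := 2) (γ := -β) (c := 4+β) (by positivity)
    (hull_subset_halfspace β (by nlinarith) (by nlinarith) (by nlinarith) (by nlinarith)
      (by nlinarith) (by nlinarith) (by nlinarith) (by nlinarith)) hp
  have A6 := interior_halfspaceX (α := -2) (γ := β) (c := 4+β) (by positivity)
    (hull_subset_halfspace β (by nlinarith) (by nlinarith) (by nlinarith) (by nlinarith)
      (by nlinarith) (by nlinarith) (by nlinarith) (by nlinarith)) hp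
  have A7 := interior_halfspaceX (α := 2) (γ := 2-β) (c := 6-β) (by nlinarith)
    (hull_subset_halfspace β (by nlinarith) (by nlinarith) (by nlinarith) (by nlinarith)
      (by nlinarith) (by nlinarith) (by nlinarith) (by nlinarith)) hp
  have A8 := interior_halfspaceX (α := -2) (γ := -(2-β)) (c := 6-β) (by nlinarith)
    (hull_subset_halfspace β (by nlinarith) (by nlinarith) (by nlinarith) (by nlinarith)
      (by nlinarith) (by nlinarith) (by nlinarith) (by nlinarith)) hp
  simp only [Set.mem_setOf_eq] at A1 A2 A3 A4 A5 A6 A7 A8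
  refine ⟨by linarith, by linarith, by linarith, by linarith, by linarith, by linarith,
    by linarith, by linarith⟩


set_option maxHeartbeats 2000000 in
/-- For `0 < β ≤ 1`, `D'₈(β) + Λ(β)` is a five-fold tiling of the plane. -/
theorem D₈'β_fivefold_tiling (β : ℝ) (h0 : 0 < β) (h1 : β ≤ 1) :
    IsKFoldTiling (D₈'β β) (Λβ β) 5 := by
  classical
  constructor
  · -- lower bound: at least 5
    rintro ⟨a, b⟩
    set n0 : ℤ := ⌈(b-1)/2⌉ with hn0def
    have F1 : -1 < b - 2*(n0:ℝ) := by
      have := Int.ceil_lt_add_one ((b-1)/2)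
      rw [← hn0def] at this
      linarith
    have F2 : b - 2*(n0:ℝ) ≤ 1 := by
      have := Int.le_ceil ((b-1)/2)
      rw [← hn0def] at this
      linarith
    set q : ℤ := ⌊(a - (n0:ℝ)*(1+β/2))/2⌋ with hqdef
    have F3 : 2*(q:ℝ) ≤ a - (n0:ℝ)*(1+β/2) := by
      have := Int.floor_le ((a - (n0:ℝ)*(1+β/2))/2)
      rw [← hqdef] at this
      linarith
    have F4 : a - (n0:ℝ)*(1+β/2) < 2*(q:ℝ) + 2 := by
      have := Int.lt_floor_add_one ((a - (n0:ℝ)*(1+β/2))/2)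
      rw [← hqdef] at this
      linarith
    set r : ℤ := ⌊(a - (n0:ℝ)*(1+β/2) - 3 - β*(b - 2*(n0:ℝ))/2)/2⌋ with hrdef
    have F5 : 2*(r:ℝ) ≤ a - (n0:ℝ)*(1+β/2) - 3 - β*(b - 2*(n0:ℝ))/2 := by
      have := Int.floor_le ((a - (n0:ℝ)*(1+β/2) - 3 - β*(b - 2*(n0:ℝ))/2)/2)
      rw [← hrdef] at this
      linarith
    have F6 : a - (n0:ℝ)*(1+β/2) - 3 - β*(b - 2*(n0:ℝ))/2 < 2*(r:ℝ) + 2 := by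
      have := Int.lt_floor_add_one ((a - (n0:ℝ)*(1+β/2) - 3 - β*(b - 2*(n0:ℝ))/2)/2)
      rw [← hrdef] at this
      linarith
    have F7 : β*(b - 2*(n0:ℝ)) ≤ β := by nlinarith
    have F8 : -β < β*(b - 2*(n0:ℝ)) := by nlinarith
    have F9 : (2-β)*(b - 2*(n0:ℝ)) ≤ 2-β := by nlinarith
    have F10 : -(2-β) < (2-β)*(b - 2*(n0:ℝ)) := by nlinarith
    -- the five lattice points
    set g : ℤ × ℤ → ℝ × ℝ := fun mn => (2*(mn.1:ℝ) + (mn.2:ℝ)*(1 + β/2), 2*(mn.2:ℝ)) with hgdef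
    set njf : ℤ → ℤ := fun j =>
      if 2*((r:ℝ)+j) ≤ a - (n0:ℝ)*(1+β/2) + (2-β)*(b - 2*(n0:ℝ))/2 then n0 + 1 else n0 - 1
      with hnjdef
    have hjne : ∀ j : ℤ, njf j ≠ n0 := by
      intro j
      rw [hnjdef]
      dsimp only
      split_ifs <;> omega
    set I : Finset (ℤ × ℤ) :=
      {(q, n0), (q+1, n0), (r+1, njf 1), (r+2, njf 2), (r+3, njf 3)} with hIdef
    refine ⟨I.image g, ?_, ?_⟩
    · -- subset condition
      intro x hx
      simp only [Finset.coe_image, Set.mem_image, Finset.mem_coe] at hx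
      obtain ⟨mn, hmnI, rfl⟩ := hx
      constructor
      · exact ⟨mn.1, mn.2, rfl⟩
      · -- membership in the octagon
        have hsub : (a, b) - g mn = (a - (2*(mn.1:ℝ) + (mn.2:ℝ)*(1 + β/2)), b - 2*(mn.2:ℝ)) := rfl
        rw [hsub]
        simp only [hIdef, Finset.mem_insert, Finset.mem_singleton] at hmnI
        have hcases : ∀ (m n : ℤ), mn = (m, n) →
            (n = n0 ∧ (m = q ∨ m = q + 1)) ∨
            ((n = n0 + 1 ∧ 2*(r:ℝ) + 2 ≤ 2*(m:ℝ) ∧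
               2*(m:ℝ) ≤ a - (n0:ℝ)*(1+β/2) + (2-β)*(b - 2*(n0:ℝ))/2) ∨
             (n = n0 - 1 ∧ 2*(m:ℝ) ≤ 2*(r:ℝ) + 6 ∧
               a - (n0:ℝ)*(1+β/2) + (2-β)*(b - 2*(n0:ℝ))/2 ≤ 2*(m:ℝ))) := by
          intro m n hmn
          rw [hmn] at hmnI
          rcases hmnI with h|h|h|h|h <;> rw [Prod.mk.injEq] at h <;> obtain ⟨rfl, rfl⟩ := h
          · exact Or.inl ⟨rfl, Or.inl rfl⟩
          · exact Or.inl ⟨rfl, Or.inr rfl⟩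
          all_goals {
            rw [hnjdef]
            dsimp only
            split_ifs with hcond
            · refine Or.inr (Or.inl ⟨rfl, ?_, ?_⟩) <;> push_cast <;> push_cast at hcond <;> linarith
            · refine Or.inr (Or.inr ⟨rfl, ?_, ?_⟩) <;> push_cast <;> push_cast at hcond <;> linarith }
        obtain ⟨m, n⟩ := mn
        rcases hcases m n rfl with ⟨rfl, hm⟩ | ⟨rfl, hm1, hm2⟩ | ⟨rfl, hm1, hm2⟩
        · -- middle row
          rcases hm with rfl | rfl <;>
          · apply mem_K β <;> push_cast <;> linarith
        · -- bottom row
          apply mem_K β <;> push_cast <;> push_cast at hm1 hm2 <;> linarith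
        · -- top row
          apply mem_K β <;> push_cast <;> push_cast at hm1 hm2 <;> linarith
    · -- cardinality
      have hinj : Set.InjOn g ↑I := by
        rintro ⟨m, n⟩ - ⟨m', n'⟩ - h
        rw [hgdef] at h
        simp only [Prod.mk.injEq] at h
        obtain ⟨h1, h2⟩ := h
        have hn : (n:ℝ) = (n':ℝ) := by linarith
        have hn' : n = n' := by exact_mod_cast hn
        subst hn'
        have hm : (m:ℝ) = (m':ℝ) := by linarith
        have : m = m' := by exact_mod_cast hm
        subst this
        rfl
      rw [Finset.card_image_of_injOn hinj]
      have : I.card = 5 := by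
        rw [hIdef]
        rw [Finset.card_insert_of_notMem, Finset.card_insert_of_notMem,
           Finset.card_insert_of_notMem, Finset.card_insert_of_notMem, Finset.card_singleton]
        all_goals {
          have e1 := hjne 1
          have e2 := hjne 2
          have e3 := hjne 3
          simp only [Finset.mem_insert, Finset.mem_singleton, Prod.mk.injEq, not_or, not_and]
          omega }
      omega
  · -- upper bound: at most 5
    rintro ⟨a, b⟩ S hS
    set n0 : ℤ := ⌈(b-1)/2⌉ with hn0def
    have F1 : -1 < b - 2*(n0:ℝ) := by
      have := Int.ceil_lt_add_one ((b-1)/2)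
      rw [← hn0def] at this
      linarith
    have F2 : b - 2*(n0:ℝ) ≤ 1 := by
      have := Int.le_ceil ((b-1)/2)
      rw [← hn0def] at this
      linarith
    set q : ℤ := ⌊(a - (n0:ℝ)*(1+β/2))/2⌋ with hqdef
    have F3 : 2*(q:ℝ) ≤ a - (n0:ℝ)*(1+β/2) := by
      have := Int.floor_le ((a - (n0:ℝ)*(1+β/2))/2)
      rw [← hqdef] at this
      linarith
    have F4 : a - (n0:ℝ)*(1+β/2) < 2*(q:ℝ) + 2 := by
      have := Int.lt_floor_add_one ((a - (n0:ℝ)*(1+β/2))/2)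
      rw [← hqdef] at this
      linarith
    set r : ℤ := ⌊(a - (n0:ℝ)*(1+β/2) - 3 - β*(b - 2*(n0:ℝ))/2)/2⌋ with hrdef
    have F5 : 2*(r:ℝ) ≤ a - (n0:ℝ)*(1+β/2) - 3 - β*(b - 2*(n0:ℝ))/2 := by
      have := Int.floor_le ((a - (n0:ℝ)*(1+β/2) - 3 - β*(b - 2*(n0:ℝ))/2)/2)
      rw [← hrdef] at this
      linarith
    have F6 : a - (n0:ℝ)*(1+β/2) - 3 - β*(b - 2*(n0:ℝ))/2 < 2*(r:ℝ) + 2 := by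
      have := Int.lt_floor_add_one ((a - (n0:ℝ)*(1+β/2) - 3 - β*(b - 2*(n0:ℝ))/2)/2)
      rw [← hrdef] at this
      linarith
    have F7 : β*(b - 2*(n0:ℝ)) ≤ β := by nlinarith
    have F8 : -β < β*(b - 2*(n0:ℝ)) := by nlinarith
    have F9 : (2-β)*(b - 2*(n0:ℝ)) ≤ 2-β := by nlinarith
    have F10 : -(2-β) < (2-β)*(b - 2*(n0:ℝ)) := by nlinarith
    have hclass : ∀ (m n : ℤ),
        ((a, b) - (2*(m:ℝ) + (n:ℝ)*(1 + β/2), 2*(n:ℝ))) ∈ interior (D₈'β β) →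
        (n = n0 ∧ (m = q ∨ m = q+1)) ∨
        (n = n0+1 ∧ (m = r+1 ∨ m = r+2 ∨ m = r+3) ∧
          2*(m:ℝ) < a - (n0:ℝ)*(1+β/2) + (2-β)*(b - 2*(n0:ℝ))/2) ∨
        (n = n0-1 ∧ (m = r+1 ∨ m = r+2 ∨ m = r+3) ∧
          a - (n0:ℝ)*(1+β/2) + (2-β)*(b - 2*(n0:ℝ))/2 < 2*(m:ℝ)) := by
      intro m n hmem
      have hP := interior_K_prop β h0 h1 hmem
      simp only [Prod.fst_sub, Prod.snd_sub] at hP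
      obtain ⟨P1, P2, P3, P4, P5, P6, P7, P8⟩ := hP
      -- identify row
      have hn_lt : (n:ℝ) < (n0:ℝ) + 2 := by linarith
      have hn_gt : (n0:ℝ) - 2 < (n:ℝ) := by linarith
      have hn_lt' : n < n0 + 2 := by exact_mod_cast (by push_cast; linarith : (n:ℝ) < ((n0+2 : ℤ):ℝ))
      have hn_gt' : n0 - 2 < n := by exact_mod_cast (by push_cast; linarith : ((n0-2 : ℤ):ℝ) < (n:ℝ))
      have hrow : n = n0 - 1 ∨ n = n0 ∨ n = n0 + 1 := by omega
      rcases hrow with rfl | rfl | rfl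
      · -- top row
        refine Or.inr (Or.inr ⟨rfl, ?_, ?_⟩)
        · have hml : (r:ℝ) < (m:ℝ) := by push_cast at P5 P6 P7 P8 ⊢; nlinarith
          have hmu : (m:ℝ) < (r:ℝ) + 4 := by push_cast at P5 P6 P7 P8 ⊢; nlinarith
          have h1' : r < m := by exact_mod_cast hml
          have h2' : m < r + 4 := by
            exact_mod_cast (by push_cast; linarith : (m:ℝ) < ((r+4:ℤ):ℝ))
          omega
        · push_cast at P7 ⊢; nlinarith
      · -- middle row
        refine Or.inl ⟨rfl, ?_⟩
        have hml : (q:ℝ) - 1 < (m:ℝ) := by linarith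
        have hmu : (m:ℝ) < (q:ℝ) + 2 := by linarith
        have h1' : q - 1 < m := by
          exact_mod_cast (by push_cast; linarith : ((q-1:ℤ):ℝ) < (m:ℝ))
        have h2' : m < q + 2 := by
          exact_mod_cast (by push_cast; linarith : (m:ℝ) < ((q+2:ℤ):ℝ))
        omega
      · -- bottom row
        refine Or.inr (Or.inl ⟨rfl, ?_, ?_⟩)
        · have hml : (r:ℝ) < (m:ℝ) := by push_cast at P5 P6 P7 P8 ⊢; nlinarith
          have hmu : (m:ℝ) < (r:ℝ) + 4 := by push_cast at P5 P6 P7 P8 ⊢; nlinarith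
          have h1' : r < m := by exact_mod_cast hml
          have h2' : m < r + 4 := by
            exact_mod_cast (by push_cast; linarith : (m:ℝ) < ((r+4:ℤ):ℝ))
          omega
        · push_cast at P8 ⊢; nlinarith
    -- map to slots
    set f : ℝ × ℝ → ℕ × ℝ := fun x =>
      (if x.2 = 2*(n0:ℝ) then 0 else 1, x.1 - x.2/2*(1 + β/2)) with hfdef
    set T : Finset (ℕ × ℝ) :=
      {(0, 2*(q:ℝ)), (0, 2*(q:ℝ)+2), (1, 2*(r:ℝ)+2), (1, 2*(r:ℝ)+4), (1, 2*(r:ℝ)+6)} with hTdef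
    have hTcard : T.card ≤ 5 := by
      rw [hTdef]
      refine (Finset.card_insert_le _ _).trans (Nat.succ_le_succ ?_)
      refine (Finset.card_insert_le _ _).trans (Nat.succ_le_succ ?_)
      refine (Finset.card_insert_le _ _).trans (Nat.succ_le_succ ?_)
      refine (Finset.card_insert_le _ _).trans (Nat.succ_le_succ ?_)
      simp
    have hget : ∀ x ∈ S, ∃ m n : ℤ, x = (2*(m:ℝ) + (n:ℝ)*(1 + β/2), 2*(n:ℝ)) ∧
        ((a, b) - (2*(m:ℝ) + (n:ℝ)*(1 + β/2), 2*(n:ℝ))) ∈ interior (D₈'β β) := by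
      intro x hx
      have := hS hx
      obtain ⟨⟨m, n, hxe⟩, hint⟩ := this
      exact ⟨m, n, hxe, hxe ▸ hint⟩
    have hmaps : ∀ x ∈ S, f x ∈ T := by
      intro x hx
      obtain ⟨m, n, hxe, hint⟩ := hget x hx
      have hfx2 : (f x).2 = 2*(m:ℝ) := by
        rw [hfdef, hxe]; dsimp only; ring
      rcases hclass m n hint with ⟨rfl, hm⟩ | ⟨rfl, hm, -⟩ | ⟨rfl, hm, -⟩
      · have hfx1 : (f x).1 = 0 := by
          rw [hfdef, hxe]; dsimp only; rw [if_pos rfl]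
        rw [hTdef]
        simp only [Finset.mem_insert, Finset.mem_singleton]
        rcases hm with rfl | rfl
        · exact Or.inl (Prod.ext hfx1 (by rw [hfx2]))
        · exact Or.inr (Or.inl (Prod.ext hfx1 (by rw [hfx2]; push_cast; ring)))
      · have hfx1 : (f x).1 = 1 := by
          rw [hfdef, hxe]; dsimp only
          rw [if_neg]
          intro hcon
          have : ((n0+1:ℤ):ℝ) = (n0:ℝ) := by push_cast at hcon ⊢; linarith
          have : (n0+1:ℤ) = n0 := by exact_mod_cast this
          omega
        rw [hTdef]
        simp only [Finset.mem_insert, Finset.mem_singleton]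
        rcases hm with rfl | rfl | rfl
        · exact Or.inr (Or.inr (Or.inl (Prod.ext hfx1 (by rw [hfx2]; push_cast; ring))))
        · exact Or.inr (Or.inr (Or.inr (Or.inl (Prod.ext hfx1 (by rw [hfx2]; push_cast; ring)))))
        · exact Or.inr (Or.inr (Or.inr (Or.inr (Prod.ext hfx1 (by rw [hfx2]; push_cast; ring)))))
      · have hfx1 : (f x).1 = 1 := by
          rw [hfdef, hxe]; dsimp only
          rw [if_neg]
          intro hcon
          have : ((n0-1:ℤ):ℝ) = (n0:ℝ) := by push_cast at hcon ⊢; linarith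
          have : (n0-1:ℤ) = n0 := by exact_mod_cast this
          omega
        rw [hTdef]
        simp only [Finset.mem_insert, Finset.mem_singleton]
        rcases hm with rfl | rfl | rfl
        · exact Or.inr (Or.inr (Or.inl (Prod.ext hfx1 (by rw [hfx2]; push_cast; ring))))
        · exact Or.inr (Or.inr (Or.inr (Or.inl (Prod.ext hfx1 (by rw [hfx2]; push_cast; ring)))))
        · exact Or.inr (Or.inr (Or.inr (Or.inr (Prod.ext hfx1 (by rw [hfx2]; push_cast; ring)))))
    have hinj : Set.InjOn f ↑S := by
      intro x hx x' hx' hfe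
      obtain ⟨m, n, hxe, hint⟩ := hget x hx
      obtain ⟨m', n', hxe', hint'⟩ := hget x' hx'
      have hfx2 : (f x).2 = 2*(m:ℝ) := by rw [hfdef, hxe]; dsimp only; ring
      have hfx2' : (f x').2 = 2*(m':ℝ) := by rw [hfdef, hxe']; dsimp only; ring
      have hm_eq : (m:ℝ) = (m':ℝ) := by
        have := congrArg Prod.snd hfe
        rw [hfx2, hfx2'] at this
        linarith
      have hm_eq' : m = m' := by exact_mod_cast hm_eq
      subst hm_eq'
      have hflag := congrArg Prod.fst hfe
      rw [hfdef] at hflag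
      dsimp only at hflag
      rw [hxe, hxe'] at hflag
      dsimp only at hflag
      -- show n = n'
      have hcn : n = n0 ↔ 2*(n:ℝ) = 2*((n0:ℤ):ℝ) := by
        constructor
        · rintro rfl; rfl
        · intro h
          have : (n:ℝ) = ((n0:ℤ):ℝ) := by linarith
          exact_mod_cast this
      have hcn' : n' = n0 ↔ 2*(n':ℝ) = 2*((n0:ℤ):ℝ) := by
        constructor
        · rintro rfl; rfl
        · intro h
          have : (n':ℝ) = ((n0:ℤ):ℝ) := by linarith
          exact_mod_cast this
      have hflag2 : (n = n0) ↔ (n' = n0) := by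
        rw [hcn, hcn']
        by_cases hA : 2*(n:ℝ) = 2*((n0:ℤ):ℝ) <;> by_cases hB : 2*(n':ℝ) = 2*((n0:ℤ):ℝ)
        · exact iff_of_true hA hB
        · rw [if_pos hA, if_neg hB] at hflag; exact absurd hflag (by norm_num)
        · rw [if_neg hA, if_pos hB] at hflag; exact absurd hflag (by norm_num)
        · exact iff_of_false hA hB
      have h12 : n = n0 → n' = n0 := hflag2.1
      have h21 : n' = n0 → n = n0 := hflag2.2
      have hn_eq : n = n' := by
        rcases hclass m n hint with ⟨hn, -⟩ | ⟨hn, -, hlt⟩ | ⟨hn, -, hgt⟩ <;>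
        rcases hclass m n' hint' with ⟨hn', -⟩ | ⟨hn', -, hlt'⟩ | ⟨hn', -, hgt'⟩ <;>
        first
        | omega
        | linarith
      subst hn_eq
      rw [hxe, hxe']
    calc S.card ≤ T.card := Finset.card_le_card_of_injOn f hmaps hinj
    _ ≤ 5 := hTcard
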